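/- arXiv:1308.4995 — 2 statements merged into one kernel-verified Lean document; each statement's English description precedes it below -/
import Mathlib

section
/- Let (z_j)_{j≥0} be a sequence of pairwise distinct complex numbers in the closed unit disc, let (e_j) be an orthonormal basis of an infinite-dimensional separable complex Hilbert space H, let T be the diagonal operator with T e_j = z_j e_j, and let 𝓡 = {p(T) : p a polynomial} be the unital algebra generated by T. If |z_{j₀}| = 1 for some j₀ ≥ 0, then the closure of the unit ball of 𝓡 in the weak operator topology contains a rank one operator (namely the orthogonal projection e_{j₀} ⊗ e_{j₀} onto the span of e_{j₀}). -/
/-!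
Let `q(X) = (X + z_{j₀}) / (2 z_{j₀})`. Since `|z_{j₀}| = 1`, `q` maps the closed unit disc into
itself, `q(z_{j₀}) = 1`, and by strict convexity of the disc `|q(z_j)| < 1` for `z_j ≠ z_{j₀}`.
Hence the operators `q(T)^n = diag(q(z_j)^n)` are contractions in `𝓡` whose diagonal entries
converge to those of `e_{j₀} ⊗ e_{j₀}`, and for uniformly bounded diagonal operators this
pointwise convergence of the entries gives WOT convergence by dominated convergence.
-/

open Filter Topology

def wotClosure (E : Type*) [NormedAddCommGroup E] [NormedSpace ℂ E]
    (S : Set (E →L[ℂ] E)) : Set (E →L[ℂ] E) :=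
  {T | ContinuousLinearMapWOT.ofCLM T ∈ closure (ContinuousLinearMapWOT.ofCLM '' S)}

open InnerProductSpace

namespace HilbertBasis

variable {ι 𝕜 E : Type*} [RCLike 𝕜] [NormedAddCommGroup E] [InnerProductSpace 𝕜 E]
  (b : HilbertBasis ι 𝕜 E)

def IsDiagonal (A : E →L[𝕜] E) (a : ι → 𝕜) : Prop := ∀ i, A (b i) = a i • b i

theorem hasSum_norm_inner_sq (x : E) : HasSum (fun i => ‖⟪b i, x⟫_𝕜‖ ^ 2) (‖x‖ ^ 2) := by
  have h := lp.hasSum_norm (p := 2) (by norm_num) (b.repr x)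
  simpa [b.repr_apply_apply] using h

variable {b}

namespace IsDiagonal

variable {A : E →L[𝕜] E} {a : ι → 𝕜}

theorem inner_apply (hA : b.IsDiagonal A a) (i : ι) (x : E) :
    ⟪b i, A x⟫_𝕜 = a i * ⟪b i, x⟫_𝕜 := by
  suffices (innerSL 𝕜 (b i)).comp A = a i • innerSL 𝕜 (b i) from congr($this x)
  refine ContinuousLinearMap.ext_on
    (Submodule.dense_iff_topologicalClosure_eq_top.mpr b.dense_span) ?_
  rintro _ ⟨j, rfl⟩
  rcases eq_or_ne i j with rfl | hij
  · simp [hA i]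
  · simp [hA j, b.orthonormal.inner_eq_zero hij]

theorem norm_le {C : ℝ} (hA : b.IsDiagonal A a) (hC : 0 ≤ C) (ha : ∀ i, ‖a i‖ ≤ C) :
    ‖A‖ ≤ C := by
  refine A.opNorm_le_bound hC fun x => ?_
  have hsq : ‖A x‖ ^ 2 ≤ (C * ‖x‖) ^ 2 := by
    rw [mul_pow]
    refine hasSum_le (fun i => ?_) (b.hasSum_norm_inner_sq (A x))
      ((b.hasSum_norm_inner_sq x).mul_left (C ^ 2))
    rw [hA.inner_apply, norm_mul, mul_pow]
    gcongr
    exact ha i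
  exact (pow_le_pow_iff_left₀ (norm_nonneg _) (by positivity) two_ne_zero).mp hsq

theorem aeval (hA : b.IsDiagonal A a) (p : Polynomial 𝕜) :
    b.IsDiagonal (Polynomial.aeval A p) (fun i => p.eval (a i)) := by
  intro i
  dsimp only
  induction p using Polynomial.induction_on with
  | C c => simp [Algebra.algebraMap_eq_smul_one]
  | add p q hp hq => simp [hp, hq, add_smul]
  | monomial n c ih =>
    rw [pow_succ, ← mul_assoc, map_mul, Polynomial.aeval_X]
    change Polynomial.aeval A _ (A (b i)) = _
    rw [hA i, map_smul, ih, smul_smul, Polynomial.eval_mul_X, mul_comm]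

theorem inner_apply_eq_tsum (hA : b.IsDiagonal A a) (x y : E) :
    ⟪y, A x⟫_𝕜 = ∑' i, a i * (⟪y, b i⟫_𝕜 * ⟪b i, x⟫_𝕜) := by
  rw [← b.tsum_inner_mul_inner y (A x)]
  congr 1 with i
  rw [hA.inner_apply, mul_left_comm]

end IsDiagonal

theorem tendsto_ofCLM_of_isDiagonal [CompleteSpace E] {α : Type*} {l : Filter α}
    {A : α → E →L[𝕜] E} {a : α → ι → 𝕜} {B : E →L[𝕜] E} {c : ι → 𝕜} {C : ℝ}
    (hA : ∀ n, b.IsDiagonal (A n) (a n)) (hB : b.IsDiagonal B c)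
    (ha : ∀ n i, ‖a n i‖ ≤ C) (hlim : ∀ i, Tendsto (a · i) l (𝓝 (c i))) :
    Tendsto (fun n => ContinuousLinearMapWOT.ofCLM (A n)) l
      (𝓝 (ContinuousLinearMapWOT.ofCLM B)) := by
  refine ContinuousLinearMapWOT.tendsto_iff_forall_inner_apply_tendsto.mpr fun x y => ?_
  simp only [ContinuousLinearMapWOT.ofCLM_apply, (hA _).inner_apply_eq_tsum,
    hB.inner_apply_eq_tsum]
  refine tendsto_tsum_of_dominated_convergence
    (bound := fun i => C * ‖⟪y, b i⟫_𝕜 * ⟪b i, x⟫_𝕜‖)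
    ((summable_norm_iff.mpr (b.summable_inner_mul_inner y x)).mul_left C)
    (fun i => (hlim i).mul_const _) (Eventually.of_forall fun n i => ?_)
  rw [norm_mul]
  gcongr
  exact ha n i

theorem isDiagonal_rankOne [DecidableEq ι] (i : ι) :
    b.IsDiagonal (rankOne 𝕜 (b i) (b i)) (fun j => if j = i then 1 else 0) := by
  intro j
  rcases eq_or_ne j i with rfl | hij
  · simp [inner_self_eq_norm_sq_to_K, b.orthonormal.1 j]
  · simp [b.orthonormal.inner_eq_zero hij.symm, hij]

end HilbertBasis

namespace Complex

noncomputable def peakPoly (u : ℂ) : Polynomial ℂ :=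
  Polynomial.C (2 * u)⁻¹ * (Polynomial.X + Polynomial.C u)

variable {u v : ℂ}

theorem norm_eval_peakPoly (hu : ‖u‖ = 1) : ‖(peakPoly u).eval v‖ = ‖v + u‖ / 2 := by
  simp [peakPoly, hu, div_eq_mul_inv, mul_comm]

theorem norm_eval_peakPoly_le_one (hu : ‖u‖ = 1) (hv : ‖v‖ ≤ 1) :
    ‖(peakPoly u).eval v‖ ≤ 1 := by
  rw [norm_eval_peakPoly hu, div_le_one two_pos]
  linarith [norm_add_le v u]

theorem norm_eval_peakPoly_lt_one (hu : ‖u‖ = 1) (hv : ‖v‖ ≤ 1) (hne : v ≠ u) :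
    ‖(peakPoly u).eval v‖ < 1 := by
  have h := norm_combo_lt_of_ne hv hu.le hne (half_pos one_pos) (half_pos one_pos) (add_halves 1)
  rwa [← smul_add, norm_smul, Real.norm_of_nonneg (half_pos one_pos).le, one_div,
    ← div_eq_inv_mul, ← norm_eval_peakPoly hu] at h

theorem eval_peakPoly_self (hu : u ≠ 0) : (peakPoly u).eval u = 1 := by
  simp only [peakPoly, Polynomial.eval_mul, Polynomial.eval_C, Polynomial.eval_add,
    Polynomial.eval_X]
  field_simp
  ring

theorem tendsto_eval_peakPoly_pow (hu : ‖u‖ = 1) (hv : ‖v‖ ≤ 1) :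
    Tendsto (fun n => (peakPoly u).eval v ^ n) atTop (𝓝 (if v = u then 1 else 0)) := by
  split_ifs with h
  · subst h
    simp [eval_peakPoly_self (norm_ne_zero_iff.mp (hu ▸ one_ne_zero))]
  · exact tendsto_pow_atTop_nhds_zero_of_norm_lt_one (norm_eval_peakPoly_lt_one hu hv h)

end Complex

open Complex in
/-- If `T = diag(z_j)` is a diagonal operator with distinct diagonal entries in the closed
unit disc and `|z_{j₀}| = 1` for some `j₀`, then the WOT-closure of the unit ball of the
unital algebra `𝓡 = {p(T)}` contains the rank one projection `e_{j₀} ⊗ e_{j₀}`. -/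
theorem rank_one_mem_wotClosure_ball_of_unimodular_diagonal_entry
    {H : Type*} [NormedAddCommGroup H] [InnerProductSpace ℂ H] [CompleteSpace H]
    (e : HilbertBasis ℕ ℂ H) (z : ℕ → ℂ) (hzd : Function.Injective z)
    (hz : ∀ j, ‖z j‖ ≤ 1)
    (T : H →L[ℂ] H) (hT : ∀ j, T (e j) = z j • e j)
    (j₀ : ℕ) (hj₀ : ‖z j₀‖ = 1) :
    (innerSL ℂ (e j₀)).smulRight (e j₀) ∈
        wotClosure H {X : H →L[ℂ] H |
          (∃ p : Polynomial ℂ, X = Polynomial.aeval T p) ∧ ‖X‖ ≤ 1} ∧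
      Module.finrank ℂ (LinearMap.range (((innerSL ℂ (e j₀)).smulRight (e j₀) : H →L[ℂ] H) : H →ₗ[ℂ] H)) = 1 := by
  set q := peakPoly (z j₀)
  have hdiag : ∀ n, e.IsDiagonal (Polynomial.aeval T (q ^ n)) (fun j => q.eval (z j) ^ n) := by
    intro n
    simpa only [Polynomial.eval_pow] using HilbertBasis.IsDiagonal.aeval hT (q ^ n)
  have hbound : ∀ n j, ‖q.eval (z j) ^ n‖ ≤ 1 := fun n j => by
    rw [norm_pow]
    exact pow_le_one₀ (norm_nonneg _) (norm_eval_peakPoly_le_one hj₀ (hz j))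
  have hlim : ∀ j, Tendsto (fun n => q.eval (z j) ^ n) atTop (𝓝 (if j = j₀ then 1 else 0)) := by
    simpa only [hzd.eq_iff] using fun j => tendsto_eval_peakPoly_pow hj₀ (hz j)
  have hej₀ : e j₀ ≠ 0 := e.orthonormal.ne_zero j₀
  refine ⟨mem_closure_of_tendsto
    (e.tendsto_ofCLM_of_isDiagonal hdiag (e.isDiagonal_rankOne j₀) hbound hlim)
    (Eventually.of_forall fun n =>
      ⟨_, ⟨⟨q ^ n, rfl⟩, (hdiag n).norm_le zero_le_one (hbound n)⟩, rfl⟩),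
    Module.rank_eq_one_iff_finrank_eq_one.mp (rank_rankOne hej₀ hej₀)⟩
end

section
/- Let (z_j)_{j≥0} be a sequence of pairwise distinct complex numbers with |z_j| < 1 for all j and such that the closure of {z_j : j ≥ 0} contains the unit circle ∂𝔻, let (e_j) be an orthonormal basis of an infinite-dimensional separable complex Hilbert space H, let T be the diagonal operator with T e_j = z_j e_j, and let 𝓡 = {p(T) : p a polynomial}. Then the closure of the unit ball of 𝓡 in the weak operator topology equals the set of all diagonal operators diag(f(z_j)) where f ∈ H∞(𝔻) and ‖f‖_∞ ≤ 1. -/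
open Filter Topology

/-!
If `‖p(T)‖ ≤ 1` then `|p(z_j)| ≤ 1` for all `j`, so `|p| ≤ 1` on the closed disc by the maximum
modulus principle, because the `z_j` accumulate at every point of the circle; by Cauchy's
estimates all Taylor coefficients of `p` then lie in the closed unit disc. The weak operator
topology is not first countable, so a WOT-limit point `X` of such operators `p(T)` is reached
along an ultrafilter of polynomials; along it the coefficients converge, and the limiting power
series `f` lies in the unit ball of `H∞` and has `f(z_j)` as the diagonal entries of `X`.

Conversely, for `f` in the unit ball of `H∞` the Taylor polynomials of the dilations `f(r ·)`,
scaled down by a factor `1 + ε`, are polynomials bounded by `1` on the disc converging to `f`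
pointwise on `𝔻`. The diagonal operators they define lie in the unit ball and converge to
`diag(f(z_j))` in the weak operator topology by dominated convergence.
-/

open Metric Polynomial Set
open scoped NNReal InnerProductSpace

theorem exists_ultrafilter_tendsto_of_mem_closure_image {α β : Type*} [TopologicalSpace β]
    {g : α → β} {s : Set α} {y : β} (h : y ∈ closure (g '' s)) :
    ∃ U : Ultrafilter α, s ∈ U ∧ Tendsto g U (𝓝 y) := by
  rw [mem_closure_iff_clusterPt, ← map_principal] at h
  obtain ⟨U, hU, hg⟩ := mapClusterPt_iff_ultrafilter.mp h
  exact ⟨U, le_principal_iff.mp hU, hg⟩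

section Eigenvector

variable {𝕜 E : Type*} [NontriviallyNormedField 𝕜] [NormedAddCommGroup E] [NormedSpace 𝕜 E]

theorem ContinuousLinearMap.aeval_apply_of_apply_eq_smul {T : E →L[𝕜] E} {v : E} {c : 𝕜}
    (h : T v = c • v) (p : 𝕜[X]) : aeval T p v = p.eval c • v := by
  induction p using Polynomial.induction_on with
  | C a => simp [Algebra.algebraMap_eq_smul_one]
  | add p q hp hq => simp [hp, hq, add_smul]
  | monomial n a hna =>
    rw [pow_succ, ← mul_assoc, map_mul, aeval_X, mul_apply_eq_comp, h, map_smul, hna, smul_smul]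
    simp only [eval_mul, eval_C, eval_pow, eval_X]
    congr 1
    ring

theorem ContinuousLinearMap.norm_le_opNorm_of_apply_eq_smul {T : E →L[𝕜] E} {v : E} {c : 𝕜}
    (h : T v = c • v) (hv : ‖v‖ = 1) : ‖c‖ ≤ ‖T‖ := by
  simpa [h, norm_smul, hv] using T.le_opNorm v

end Eigenvector

namespace HilbertBasis

variable {ι 𝕜 H : Type*} [RCLike 𝕜] [NormedAddCommGroup H] [InnerProductSpace 𝕜 H]
  (e : HilbertBasis ι 𝕜 H) {X : H →L[𝕜] H} {d : ι → 𝕜}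

theorem ext_inner {u v : H} (h : ∀ i, ⟪e i, u⟫_𝕜 = ⟪e i, v⟫_𝕜) : u = v :=
  e.repr.injective <| lp.ext <| funext fun i => by simp only [e.repr_apply_apply, h]

theorem inner_apply_of_diag (hX : ∀ j, X (e j) = d j • e j) (x : H) (i : ι) :
    ⟪e i, X x⟫_𝕜 = d i * ⟪e i, x⟫_𝕜 := by
  have hsum : HasSum (fun j => ⟪e i, X (e.repr x j • e j)⟫_𝕜) ⟪e i, X x⟫_𝕜 :=
    (e.hasSum_repr x).mapL ((innerSL 𝕜 (e i)).comp X)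
  have hsingle : ∀ j ≠ i, ⟪e i, X (e.repr x j • e j)⟫_𝕜 = 0 := fun j hj => by
    rw [map_smul, hX, inner_smul_right, inner_smul_right, e.orthonormal.inner_eq_zero hj.symm,
      mul_zero, mul_zero]
  rw [hsum.unique (hasSum_single i hsingle), map_smul, hX, inner_smul_right, inner_smul_right,
    inner_self_eq_one_of_norm_eq_one (e.orthonormal.1 i), e.repr_apply_apply]
  ring

theorem norm_le_of_diag (hX : ∀ j, X (e j) = d j • e j) {C : ℝ} (hC : 0 ≤ C)
    (hd : ∀ j, ‖d j‖ ≤ C) : ‖X‖ ≤ C := by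
  refine X.opNorm_le_bound hC fun x => ?_
  have hCx : C * ‖x‖ = ‖e.repr ((C : 𝕜) • x)‖ := by
    rw [LinearIsometryEquiv.norm_map, norm_smul, RCLike.norm_ofReal, abs_of_nonneg hC]
  rw [hCx, ← e.repr.norm_map]
  refine lp.norm_mono two_ne_zero fun i => ?_
  rw [e.repr_apply_apply, e.repr_apply_apply, inner_apply_of_diag e hX, inner_smul_right,
    norm_mul, norm_mul, RCLike.norm_ofReal, abs_of_nonneg hC]
  gcongr
  exact hd i

theorem hasSum_inner_apply_of_diag (hX : ∀ j, X (e j) = d j • e j) (x y : H) :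
    HasSum (fun i => d i * (⟪y, e i⟫_𝕜 * ⟪e i, x⟫_𝕜)) ⟪y, X x⟫_𝕜 := by
  convert e.hasSum_inner_mul_inner y (X x) using 2 with i
  rw [inner_apply_of_diag e hX]
  ring

variable [CompleteSpace H] {α : Type*} {l : Filter α} {B : α → H →L[𝕜] H} {D : α → ι → 𝕜}

theorem tendsto_ofCLM_of_diag (hB : ∀ a j, B a (e j) = D a j • e j)
    (hX : ∀ j, X (e j) = d j • e j) {C : ℝ} (hD : ∀ a j, ‖D a j‖ ≤ C)
    (hlim : ∀ j, Tendsto (fun a => D a j) l (𝓝 (d j))) :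
    Tendsto (fun a => ContinuousLinearMapWOT.ofCLM (B a)) l
      (𝓝 (ContinuousLinearMapWOT.ofCLM X)) := by
  rw [ContinuousLinearMapWOT.tendsto_iff_forall_inner_apply_tendsto]
  intro x y
  simp only [ContinuousLinearMapWOT.ofCLM_apply]
  rw [(hasSum_inner_apply_of_diag e hX x y).tsum_eq.symm]
  simp only [← (hasSum_inner_apply_of_diag e (hB _) x y).tsum_eq]
  refine tendsto_tsum_of_dominated_convergence
    (summable_norm_iff.mpr (e.summable_inner_mul_inner y x) |>.mul_left C)
    (fun i => (hlim i).mul_const _) (Eventually.of_forall fun a i => ?_)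
  rw [norm_mul]
  gcongr
  exact hD a i

theorem apply_eq_smul_of_tendsto_ofCLM_of_diag [l.NeBot] (hB : ∀ a j, B a (e j) = D a j • e j)
    (hBX : Tendsto (fun a => ContinuousLinearMapWOT.ofCLM (B a)) l
      (𝓝 (ContinuousLinearMapWOT.ofCLM X)))
    (hlim : ∀ j, Tendsto (fun a => D a j) l (𝓝 (d j))) (j : ι) :
    X (e j) = d j • e j := by
  rw [ContinuousLinearMapWOT.tendsto_iff_forall_inner_apply_tendsto] at hBX
  refine e.ext_inner fun i => ?_
  rw [inner_smul_right]
  refine tendsto_nhds_unique ?_ ((hlim j).mul_const _)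
  simpa [ContinuousLinearMapWOT.ofCLM_apply, hB, inner_smul_right] using hBX (e j) (e i)

end HilbertBasis

theorem Polynomial.iteratedDeriv_eval {𝕜 : Type*} [NontriviallyNormedField 𝕜] (p : 𝕜[X])
    (k : ℕ) : iteratedDeriv k (fun x => p.eval x) = fun x => (derivative^[k] p).eval x := by
  induction k with
  | zero => rfl
  | succ k ih =>
    ext x
    rw [iteratedDeriv_succ, ih, Polynomial.deriv, Function.iterate_succ_apply']

theorem Polynomial.norm_coeff_le_of_forall_mem_sphere_norm_le (p : ℂ[X]) {R C : ℝ} (hR : 0 < R)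
    (h : ∀ w ∈ sphere (0 : ℂ) R, ‖p.eval w‖ ≤ C) (k : ℕ) : ‖p.coeff k‖ ≤ C / R ^ k := by
  have hcauchy := Complex.norm_iteratedDeriv_le_of_forall_mem_sphere_norm_le k hR
    p.differentiable.diffContOnCl h
  have hderiv : iteratedDeriv k (fun x => p.eval x) 0 = k.factorial * p.coeff k := by
    simp only [iteratedDeriv_eval]
    rw [← coeff_zero_eq_eval_zero, coeff_iterate_derivative, zero_add,
      Nat.descFactorial_self, nsmul_eq_mul]
  rw [hderiv, norm_mul, Complex.norm_natCast, mul_div_assoc] at hcauchy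
  exact le_of_mul_le_mul_left hcauchy (by positivity)

theorem Complex.norm_le_of_sphere_subset_closure {F : Type*} [NormedAddCommGroup F]
    [NormedSpace ℂ F] {f : ℂ → F} (hf : Differentiable ℂ f) {s : Set ℂ} {c : ℂ} {R C : ℝ}
    (hR : R ≠ 0) (hs : sphere c R ⊆ closure s) (h : ∀ w ∈ s, ‖f w‖ ≤ C) :
    ∀ w ∈ closedBall c R, ‖f w‖ ≤ C := by
  have hcl : ∀ w ∈ closure s, ‖f w‖ ≤ C := fun w hw =>
    closure_minimal h (isClosed_le hf.continuous.norm continuous_const) hw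
  intro w hw
  rw [← closure_ball c hR] at hw
  refine Complex.norm_le_of_forall_mem_frontier_norm_le isBounded_ball hf.diffContOnCl
    (fun ζ hζ => hcl ζ (hs ?_)) hw
  rwa [frontier_ball c hR] at hζ

theorem Polynomial.tendsto_eval_of_tendsto_coeff {α : Type*} {l : Filter α} {p : α → ℂ[X]}
    {a : ℕ → ℂ} {C : ℝ} (hp : ∀ᶠ i in l, ∀ k, ‖(p i).coeff k‖ ≤ C)
    (ha : ∀ k, Tendsto (fun i => (p i).coeff k) l (𝓝 (a k))) {w : ℂ} (hw : ‖w‖ < 1) :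
    Tendsto (fun i => (p i).eval w) l (𝓝 (∑' k, a k * w ^ k)) := by
  have heval : ∀ q : ℂ[X], q.eval w = ∑' k, q.coeff k * w ^ k := fun q => by
    rw [eval_eq_sum_range, tsum_eq_sum fun k hk => ?_]
    rw [coeff_eq_zero_of_natDegree_lt (by simpa using hk), zero_mul]
  simp only [heval]
  refine tendsto_tsum_of_dominated_convergence
    ((summable_geometric_of_lt_one (norm_nonneg w) hw).mul_left C)
    (fun k => (ha k).mul_const _) (hp.mono fun i hi k => ?_)
  rw [norm_mul, norm_pow]
  gcongr
  exact hi k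

theorem differentiableOn_tsum_mul_pow {a : ℕ → ℂ} {C : ℝ} (ha : ∀ k, ‖a k‖ ≤ C) :
    DifferentiableOn ℂ (fun w => ∑' k, a k * w ^ k) (ball 0 1) := by
  intro w hw
  obtain ⟨r, hwr, hr1⟩ := exists_between (mem_ball_zero_iff.mp hw)
  have hdiff : DifferentiableOn ℂ (fun w => ∑' k, a k * w ^ k) (ball 0 r) :=
    Complex.differentiableOn_tsum_of_summable_norm
      ((summable_geometric_of_lt_one ((norm_nonneg w).trans hwr.le) hr1).mul_left C)
      (fun k => (differentiable_const _ |>.mul (differentiable_pow k)).differentiableOn)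
      isOpen_ball fun k v hv => by
        rw [norm_mul, norm_pow]
        gcongr
        · exact (norm_nonneg _).trans (ha 0)
        · exact ha k
        · exact (mem_ball_zero_iff.mp hv).le
  exact (hdiff.differentiableAt (isOpen_ball.mem_nhds (mem_ball_zero_iff.mpr hwr)))
    |>.differentiableWithinAt

theorem exists_differentiableOn_tendsto_eval {α : Type*} (U : Ultrafilter α) {p : α → ℂ[X]}
    (hp : ∀ᶠ i in U, ∀ w ∈ closedBall (0 : ℂ) 1, ‖(p i).eval w‖ ≤ 1) :
    ∃ f : ℂ → ℂ, DifferentiableOn ℂ f (ball 0 1) ∧ (∀ w ∈ ball (0 : ℂ) 1, ‖f w‖ ≤ 1) ∧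
      ∀ w ∈ ball (0 : ℂ) 1, Tendsto (fun i => (p i).eval w) U (𝓝 (f w)) := by
  have hcoeff : ∀ᶠ i in U, ∀ k, (p i).coeff k ∈ closedBall (0 : ℂ) 1 := hp.mono fun i hi k => by
    simpa using (p i).norm_coeff_le_of_forall_mem_sphere_norm_le one_pos
      (fun w hw => hi w (sphere_subset_closedBall hw)) k
  have hlim : ∀ k, ∃ a ∈ closedBall (0 : ℂ) 1, Tendsto (fun i => (p i).coeff k) U (𝓝 a) :=
    fun k => (isCompact_closedBall 0 1).ultrafilter_le_nhds (U.map _)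
      (tendsto_principal.mpr (hcoeff.mono fun i hi => hi k))
  choose a ha hlim using hlim
  have hnorm_a : ∀ k, ‖a k‖ ≤ 1 := fun k => mem_closedBall_zero_iff.mp (ha k)
  have htendsto : ∀ w ∈ ball (0 : ℂ) 1,
      Tendsto (fun i => (p i).eval w) U (𝓝 (∑' k, a k * w ^ k)) := fun w hw =>
    tendsto_eval_of_tendsto_coeff (hcoeff.mono fun i hi k => mem_closedBall_zero_iff.mp (hi k))
      hlim (mem_ball_zero_iff.mp hw)
  refine ⟨_, differentiableOn_tsum_mul_pow hnorm_a, fun w hw => ?_, htendsto⟩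
  exact le_of_tendsto (htendsto w hw).norm (hp.mono fun i hi => hi w (ball_subset_closedBall hw))

theorem exists_polynomial_norm_sub_lt_of_differentiableOn {g : ℂ → ℂ} {R : ℝ} (hR : 1 < R)
    (hg : DifferentiableOn ℂ g (ball 0 R)) {ε : ℝ} (hε : 0 < ε) :
    ∃ P : ℂ[X], ∀ w ∈ closedBall (0 : ℂ) 1, ‖P.eval w - g w‖ < ε := by
  obtain ⟨R₁, h1R₁, hR₁R⟩ := exists_between hR
  obtain ⟨r, h1r, hrR₁⟩ := exists_between h1R₁
  lift R₁ to ℝ≥0 using by linarith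
  lift r to ℝ≥0 using by linarith
  have hR₁ : 0 < R₁ := by exact_mod_cast (by linarith : (0 : ℝ) < R₁)
  have hps : HasFPowerSeriesOnBall g (cauchyPowerSeries g 0 R₁) 0 R₁ :=
    (hg.mono (closedBall_subset_ball hR₁R)).hasFPowerSeriesOnBall hR₁
  obtain ⟨N, hN⟩ := (Metric.tendstoUniformlyOn_iff.mp
    (hps.tendstoUniformlyOn (by exact_mod_cast hrR₁)) ε hε).exists
  refine ⟨∑ k ∈ Finset.range N, monomial k ((cauchyPowerSeries g 0 R₁).coeff k), fun w hw => ?_⟩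
  have hw' : w ∈ ball (0 : ℂ) r := closedBall_subset_ball h1r hw
  simpa [dist_eq_norm', FormalMultilinearSeries.partialSum, eval_finsetSum,
    FormalMultilinearSeries.apply_eq_pow_smul_coeff, mul_comm] using hN w hw'

theorem norm_inv_one_add_smul_sub_le {E : Type*} [NormedAddCommGroup E] [NormedSpace ℝ E]
    {u v : E} {ε : ℝ} (hε : 0 ≤ ε) (hv : ‖v‖ ≤ 1) (huv : ‖u - v‖ ≤ ε) :
    ‖(1 + ε)⁻¹ • u‖ ≤ 1 ∧ ‖(1 + ε)⁻¹ • u - v‖ ≤ 2 * ε := by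
  have hpos : 0 < 1 + ε := by linarith
  have hu : ‖u‖ ≤ 1 + ε := by linarith [norm_le_insert' u v]
  have hscaled : ‖(1 + ε)⁻¹ • u‖ ≤ 1 := by
    rw [norm_smul, Real.norm_of_nonneg (inv_nonneg.mpr hpos.le), inv_mul_le_iff₀ hpos, mul_one]
    exact hu
  refine ⟨hscaled, ?_⟩
  have hsplit : (1 + ε)⁻¹ • u - v = (u - v) - ε • ((1 + ε)⁻¹ • u) := by
    have hcoef : (1 + ε)⁻¹ = 1 - ε * (1 + ε)⁻¹ := by field_simp; ring
    nth_rw 1 [hcoef]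
    module
  calc ‖(1 + ε)⁻¹ • u - v‖ ≤ ‖u - v‖ + ‖ε • ((1 + ε)⁻¹ • u)‖ := by
        rw [hsplit]; exact norm_sub_le _ _
    _ ≤ ε + ε * 1 := by
        rw [norm_smul, Real.norm_of_nonneg hε]
        gcongr
    _ = 2 * ε := by ring

theorem exists_polynomial_norm_le_one_near_dilation {f : ℂ → ℂ}
    (hf : DifferentiableOn ℂ f (ball 0 1)) (hfb : ∀ w ∈ ball (0 : ℂ) 1, ‖f w‖ ≤ 1) {r : ℝ}
    (hr : r ∈ Ioo 0 1) :
    ∃ q : ℂ[X], (∀ w ∈ closedBall (0 : ℂ) 1, ‖q.eval w‖ ≤ 1) ∧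
      ∀ w ∈ closedBall (0 : ℂ) 1, ‖q.eval w - f (r * w)‖ ≤ 2 * (1 - r) := by
  have hmaps : MapsTo (fun w : ℂ => (r : ℂ) * w) (ball 0 r⁻¹) (ball 0 1) := fun w hw => by
    rw [mem_ball_zero_iff] at hw ⊢
    rw [norm_mul, Complex.norm_real, Real.norm_of_nonneg hr.1.le]
    calc r * ‖w‖ < r * r⁻¹ := by gcongr; exact hr.1
      _ = 1 := mul_inv_cancel₀ hr.1.ne'
  have h1r : 1 < r⁻¹ := one_lt_inv₀ hr.1 |>.mpr hr.2
  obtain ⟨P, hP⟩ := exists_polynomial_norm_sub_lt_of_differentiableOn h1r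
    (hf.comp ((differentiable_id.const_mul _).differentiableOn) hmaps) (sub_pos.mpr hr.2)
  have hnear : ∀ w ∈ closedBall (0 : ℂ) 1, ‖(1 + (1 - r))⁻¹ • P.eval w‖ ≤ 1 ∧
      ‖(1 + (1 - r))⁻¹ • P.eval w - f (r * w)‖ ≤ 2 * (1 - r) := fun w hw =>
    norm_inv_one_add_smul_sub_le (sub_nonneg.mpr hr.2.le)
      (hfb _ (hmaps (closedBall_subset_ball h1r hw))) (hP w hw).le
  refine ⟨(1 + (1 - r))⁻¹ • P, fun w hw => ?_, fun w hw => ?_⟩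
  · simpa only [eval_smul] using (hnear w hw).1
  · simpa only [eval_smul] using (hnear w hw).2

theorem exists_seq_polynomial_tendsto {f : ℂ → ℂ} (hf : DifferentiableOn ℂ f (ball 0 1))
    (hfb : ∀ w ∈ ball (0 : ℂ) 1, ‖f w‖ ≤ 1) :
    ∃ q : ℕ → ℂ[X], (∀ m, ∀ w ∈ closedBall (0 : ℂ) 1, ‖(q m).eval w‖ ≤ 1) ∧
      ∀ w ∈ ball (0 : ℂ) 1, Tendsto (fun m => (q m).eval w) atTop (𝓝 (f w)) := by
  obtain ⟨r, -, hr, hr1⟩ := exists_seq_strictMono_tendsto' (zero_lt_one' ℝ)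
  choose q hq1 hqf using fun m => exists_polynomial_norm_le_one_near_dilation hf hfb (hr m)
  refine ⟨q, hq1, fun w hw => ?_⟩
  have hdil : Tendsto (fun m => f (r m * w)) atTop (𝓝 (f w)) := by
    have hrw : Tendsto (fun m => (r m : ℂ) * w) atTop (𝓝 w) := by
      simpa using ((Complex.continuous_ofReal.tendsto 1).comp hr1).mul_const w
    exact (hf.continuousOn.continuousAt (isOpen_ball.mem_nhds hw)).tendsto.comp hrw
  have herr : Tendsto (fun m => (q m).eval w - f (r m * w)) atTop (𝓝 0) := by
    refine squeeze_zero_norm (fun m => hqf m w (ball_subset_closedBall hw)) ?_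
    simpa using ((tendsto_const_nhds (x := (1 : ℝ))).sub hr1).const_mul 2
  simpa using herr.add hdil

theorem wotClosure_ball_eq_Hinfty_diagonal_general
    {H : Type*} [NormedAddCommGroup H] [InnerProductSpace ℂ H] [CompleteSpace H]
    (e : HilbertBasis ℕ ℂ H) (z : ℕ → ℂ)
    (hz : ∀ j, ‖z j‖ < 1)
    (hsphere : Metric.sphere (0 : ℂ) 1 ⊆ closure (Set.range z))
    (T : H →L[ℂ] H) (hT : ∀ j, T (e j) = z j • e j) :
    wotClosure H {X : H →L[ℂ] H |
        (∃ p : Polynomial ℂ, X = Polynomial.aeval T p) ∧ ‖X‖ ≤ 1} =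
      {X : H →L[ℂ] H | ∃ f : ℂ → ℂ, DifferentiableOn ℂ f (Metric.ball 0 1) ∧
        (∀ w ∈ Metric.ball (0 : ℂ) 1, ‖f w‖ ≤ 1) ∧
        ∀ j, X (e j) = f (z j) • e j} := by
  have hdiag (p : ℂ[X]) (j : ℕ) : aeval T p (e j) = p.eval (z j) • e j :=
    T.aeval_apply_of_apply_eq_smul (hT j) p
  have hzball (j : ℕ) : z j ∈ ball (0 : ℂ) 1 := mem_ball_zero_iff.mpr (hz j)
  have hball : {X : H →L[ℂ] H | (∃ p : ℂ[X], X = aeval T p) ∧ ‖X‖ ≤ 1} =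
      (fun p : ℂ[X] => aeval T p) '' {p : ℂ[X] | ‖aeval T p‖ ≤ 1} := by
    ext X
    constructor
    · rintro ⟨⟨p, rfl⟩, hp⟩
      exact ⟨p, hp, rfl⟩
    · rintro ⟨p, hp, rfl⟩
      exact ⟨⟨p, rfl⟩, hp⟩
  ext X
  simp only [wotClosure, hball, image_image, mem_ofPred_eq]
  constructor
  · intro hX
    obtain ⟨U, hUball, hUX⟩ := exists_ultrafilter_tendsto_of_mem_closure_image hX
    have hUdisc : ∀ᶠ p : ℂ[X] in U, ∀ w ∈ closedBall (0 : ℂ) 1, ‖p.eval w‖ ≤ 1 :=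
      Filter.mem_of_superset hUball fun p hp =>
        Complex.norm_le_of_sphere_subset_closure p.differentiable one_ne_zero hsphere <|
          forall_mem_range.mpr fun j =>
            ((aeval T p).norm_le_opNorm_of_apply_eq_smul (hdiag p j) (e.orthonormal.1 j)).trans hp
    obtain ⟨f, hf, hfb, hfU⟩ := exists_differentiableOn_tendsto_eval U hUdisc
    exact ⟨f, hf, hfb, e.apply_eq_smul_of_tendsto_ofCLM_of_diag hdiag hUX
      fun j => hfU (z j) (hzball j)⟩
  · rintro ⟨f, hf, hfb, hXf⟩
    obtain ⟨q, hq1, hqf⟩ := exists_seq_polynomial_tendsto hf hfb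
    have hqz (m j : ℕ) : ‖(q m).eval (z j)‖ ≤ 1 := hq1 m (z j) (ball_subset_closedBall (hzball j))
    exact mem_closure_of_tendsto
      (e.tendsto_ofCLM_of_diag (fun m => hdiag (q m)) hXf hqz fun j => hqf (z j) (hzball j))
      (Eventually.of_forall fun m =>
        mem_image_of_mem _ (e.norm_le_of_diag (hdiag (q m)) zero_le_one (hqz m)))

/-- If `T = diag(z_j)` is a diagonal operator with distinct diagonal entries in the open
unit disc accumulating at every point of the unit circle, then the WOT-closure of the unit
ball of the unital algebra `𝓡 = {p(T)}` equals the set of all diagonal operators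
`diag(f(z_j))` with `f ∈ H^∞(𝔻)` and `‖f‖_∞ ≤ 1`. -/
theorem wotClosure_ball_eq_Hinfty_diagonal
    {H : Type*} [NormedAddCommGroup H] [InnerProductSpace ℂ H] [CompleteSpace H]
    (e : HilbertBasis ℕ ℂ H) (z : ℕ → ℂ) (hzd : Function.Injective z)
    (hz : ∀ j, ‖z j‖ < 1)
    (hsphere : Metric.sphere (0 : ℂ) 1 ⊆ closure (Set.range z))
    (T : H →L[ℂ] H) (hT : ∀ j, T (e j) = z j • e j) :
    wotClosure H {X : H →L[ℂ] H |
        (∃ p : Polynomial ℂ, X = Polynomial.aeval T p) ∧ ‖X‖ ≤ 1} =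
      {X : H →L[ℂ] H | ∃ f : ℂ → ℂ, DifferentiableOn ℂ f (Metric.ball 0 1) ∧
        (∀ w ∈ Metric.ball (0 : ℂ) 1, ‖f w‖ ≤ 1) ∧
        ∀ j, X (e j) = f (z j) • e j} :=
  wotClosure_ball_eq_Hinfty_diagonal_general e z hz hsphere T hT
end
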